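/- Let γ: H → k be normalized (γ(1)=1), convolution invertible, with γ∘α = γ. Then D¹(γ)(h,g) := γ(h₁)γ(g₁)γ⁻¹(h₂g₂) defines a normalized, convolution invertible left Hom-2-cocycle on H. -/

import Mathlib

open scoped TensorProduct BigOperators

universe u v

/-- A Hom-Hopf algebra over a field `k`, with a chosen Sweedler-type
decomposition (`Idx`, `T`, `d1`, `d2`) of the comultiplication:
`comul h = ∑ i in T h, d1 h i ⊗ₜ d2 h i`.  The structure map `α` is assumed
bijective (a linear equivalence), as throughout the paper. -/
structure HomHopf (k : Type u) (H : Type v) [Field k] [AddCommGroup H] [Module k H] where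
  mul : H →ₗ[k] H →ₗ[k] H
  one : H
  α : H ≃ₗ[k] H
  comul : H →ₗ[k] H ⊗[k] H
  counit : H →ₗ[k] k
  S : H →ₗ[k] H
  Idx : Type v
  T : H → Finset Idx
  d1 : H → Idx → H
  d2 : H → Idx → H
  repr : ∀ h, comul h = ∑ i ∈ T h, d1 h i ⊗ₜ[k] d2 h i
  α_one : α one = one
  α_mul : ∀ x y, α (mul x y) = mul (α x) (α y)
  one_mul : ∀ x, mul one x = α x
  mul_one : ∀ x, mul x one = α x
  hom_assoc : ∀ x y z, mul (α x) (mul y z) = mul (mul x y) (α z)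
  counit_α : ∀ h, counit (α h) = counit h
  comul_α : ∀ h, comul (α h) = ∑ i ∈ T h, α (d1 h i) ⊗ₜ[k] α (d2 h i)
  counit_left : ∀ h, ∑ i ∈ T h, counit (d1 h i) • d2 h i = α h
  counit_right : ∀ h, ∑ i ∈ T h, counit (d2 h i) • d1 h i = α h
  hom_coassoc : ∀ h,
    (TensorProduct.assoc k H H H) (∑ i ∈ T h, comul (d1 h i) ⊗ₜ[k] α (d2 h i))
      = ∑ i ∈ T h, α (d1 h i) ⊗ₜ[k] comul (d2 h i)
  counit_one : counit one = 1
  counit_mul : ∀ x y, counit (mul x y) = counit x * counit y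
  comul_one : comul one = one ⊗ₜ[k] one
  comul_mul : ∀ x y, comul (mul x y)
      = ∑ i ∈ T x, ∑ j ∈ T y, mul (d1 x i) (d1 y j) ⊗ₜ[k] mul (d2 x i) (d2 y j)
  S_α : ∀ h, S (α h) = α (S h)
  S_left : ∀ h, ∑ i ∈ T h, mul (S (d1 h i)) (d2 h i) = counit h • one
  S_right : ∀ h, ∑ i ∈ T h, mul (d1 h i) (S (d2 h i)) = counit h • one

/-- A unital Hom-associative algebra with bijective structure map. -/
structure HomAlg (k : Type u) (A : Type v) [Field k] [AddCommGroup A] [Module k A] where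
  mul : A →ₗ[k] A →ₗ[k] A
  one : A
  β : A ≃ₗ[k] A
  β_one : β one = one
  β_mul : ∀ x y, β (mul x y) = mul (β x) (β y)
  one_mul : ∀ x, mul one x = β x
  mul_one : ∀ x, mul x one = β x
  hom_assoc : ∀ x y z, mul (β x) (mul y z) = mul (mul x y) (β z)

section Lazy

variable {k : Type u} {H : Type v} [Field k] [AddCommGroup H] [Module k H]

/-- `σ ∘ (α ⊗ α) = σ`. -/
def AlphaInvariant2 (HH : HomHopf k H) (σ : H → H → k) : Prop :=
  ∀ h g, σ (HH.α h) (HH.α g) = σ h g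

/-- The left Hom-2-cocycle equation
`σ(l₁,k₁)σ(α²(h), l₂k₂) = σ(h₁,l₁)σ(h₂l₂, α²(k))`. -/
def LeftCocycleEq (HH : HomHopf k H) (σ : H → H → k) : Prop :=
  ∀ h l m, ∑ j ∈ HH.T l, ∑ n ∈ HH.T m,
      σ (HH.d1 l j) (HH.d1 m n) * σ (HH.α (HH.α h)) (HH.mul (HH.d2 l j) (HH.d2 m n))
    = ∑ i ∈ HH.T h, ∑ j ∈ HH.T l,
      σ (HH.d1 h i) (HH.d1 l j) * σ (HH.mul (HH.d2 h i) (HH.d2 l j)) (HH.α (HH.α m))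

/-- The right Hom-2-cocycle equation
`σ(α²(h), l₁k₁)σ(l₂,k₂) = σ(h₁l₁, α²(k))σ(h₂,l₂)`. -/
def RightCocycleEq (HH : HomHopf k H) (σ : H → H → k) : Prop :=
  ∀ h l m, ∑ j ∈ HH.T l, ∑ n ∈ HH.T m,
      σ (HH.α (HH.α h)) (HH.mul (HH.d1 l j) (HH.d1 m n)) * σ (HH.d2 l j) (HH.d2 m n)
    = ∑ i ∈ HH.T h, ∑ j ∈ HH.T l,
      σ (HH.mul (HH.d1 h i) (HH.d1 l j)) (HH.α (HH.α m)) * σ (HH.d2 h i) (HH.d2 l j)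

/-- A left Hom-2-cocycle. -/
def IsLeftCocycle (HH : HomHopf k H) (σ : H → H → k) : Prop :=
  AlphaInvariant2 HH σ ∧ LeftCocycleEq HH σ

/-- A right Hom-2-cocycle. -/
def IsRightCocycle (HH : HomHopf k H) (σ : H → H → k) : Prop :=
  AlphaInvariant2 HH σ ∧ RightCocycleEq HH σ

/-- `σ` is normalized: `σ(1,h) = σ(h,1) = ε(h)`. -/
def Normalized2 (HH : HomHopf k H) (σ : H → H → k) : Prop :=
  (∀ h, σ HH.one h = HH.counit h) ∧ (∀ h, σ h HH.one = HH.counit h)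

/-- `τ` is the convolution inverse of `σ : H ⊗ H → k`. -/
def ConvInv2 (HH : HomHopf k H) (σ τ : H → H → k) : Prop :=
  (∀ h g, ∑ i ∈ HH.T h, ∑ j ∈ HH.T g,
      σ (HH.d1 h i) (HH.d1 g j) * τ (HH.d2 h i) (HH.d2 g j) = HH.counit h * HH.counit g) ∧
  (∀ h g, ∑ i ∈ HH.T h, ∑ j ∈ HH.T g,
      τ (HH.d1 h i) (HH.d1 g j) * σ (HH.d2 h i) (HH.d2 g j) = HH.counit h * HH.counit g)

/-- `σ` is lazy: `σ(h₁,g₁)h₂g₂ = h₁g₁σ(h₂,g₂)`. -/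
def IsLazy2 (HH : HomHopf k H) (σ : H → H → k) : Prop :=
  ∀ h g, ∑ i ∈ HH.T h, ∑ j ∈ HH.T g,
      σ (HH.d1 h i) (HH.d1 g j) • HH.mul (HH.d2 h i) (HH.d2 g j)
    = ∑ i ∈ HH.T h, ∑ j ∈ HH.T g,
      σ (HH.d2 h i) (HH.d2 g j) • HH.mul (HH.d1 h i) (HH.d1 g j)

/-- The convolution product of `σ, τ : H ⊗ H → k`. -/
def conv2 (HH : HomHopf k H) (σ τ : H → H → k) : H → H → k :=
  fun h g => ∑ i ∈ HH.T h, ∑ j ∈ HH.T g,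
    σ (HH.d1 h i) (HH.d1 g j) * τ (HH.d2 h i) (HH.d2 g j)

/-- The deformed multiplication `h ·_σ g = σ(h₁,g₁)α⁻¹(h₂g₂)` on `H`. -/
def mulSigma (HH : HomHopf k H) (σ : H → H → k) : H → H → H :=
  fun h g => ∑ i ∈ HH.T h, ∑ j ∈ HH.T g,
    σ (HH.d1 h i) (HH.d1 g j) • HH.α.symm (HH.mul (HH.d2 h i) (HH.d2 g j))

/-- The convolution product of `γ, δ : H → k`. -/
def conv1 (HH : HomHopf k H) (γ δ : H → k) : H → k :=
  fun h => ∑ i ∈ HH.T h, γ (HH.d1 h i) * δ (HH.d2 h i)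

/-- `δ` is the convolution inverse of `γ : H → k`. -/
def ConvInv1 (HH : HomHopf k H) (γ δ : H → k) : Prop :=
  (∀ h, conv1 HH γ δ h = HH.counit h) ∧ (∀ h, conv1 HH δ γ h = HH.counit h)

/-- `γ : H → k` is lazy: `γ(h₁)h₂ = h₁γ(h₂)`. -/
def IsLazy1 (HH : HomHopf k H) (γ : H → k) : Prop :=
  ∀ h, ∑ i ∈ HH.T h, γ (HH.d1 h i) • HH.d2 h i = ∑ i ∈ HH.T h, γ (HH.d2 h i) • HH.d1 h i

/-- `D¹(γ)(h,g) = γ(h₁)γ(g₁)γ⁻¹(h₂g₂)` (with `δ` the convolution inverse of `γ`). -/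
def D1 (HH : HomHopf k H) (γ δ : H → k) : H → H → k :=
  fun h g => ∑ i ∈ HH.T h, ∑ j ∈ HH.T g,
    γ (HH.d1 h i) * γ (HH.d1 g j) * δ (HH.mul (HH.d2 h i) (HH.d2 g j))

end Lazy

/-!
Write `D¹(γ) = (γ ⊗ γ) ⋆ (γ⁻¹ ∘ m)`, where `⋆` is convolution of bilinear forms, i.e. of
functionals on the Hom-coalgebra `H ⊗ H`. This convolution is Hom-associative,
`(A ⋆ P) ⋆ (B ∘ α) = (A ∘ α) ⋆ (P ⋆ B)` (with `α` acting diagonally), so whenever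
`P ⋆ Q = ε ⊗ ε` for `α`-invariant `P`, `Q`, the product `(A ⋆ P) ⋆ (Q ⋆ D)` telescopes to
`(A ∘ α) ⋆ (D ∘ α)`. With `P = γ⁻¹ ∘ m` and `Q = γ ∘ m` this shows that `(γ ∘ m) ⋆ (γ⁻¹ ⊗ γ⁻¹)`
is inverse to `D¹(γ)`, and it reduces the two sides of the cocycle identity to
`γ(h₁)γ(l₁)γ(m₁)γ⁻¹(α²(h₂)(α(l₂)α(m₂)))` and `γ(h₁)γ(l₁)γ(m₁)γ⁻¹((α(h₂)α(l₂))α²(m₂))`,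
which agree by Hom-associativity of `H`. The invariance `γ⁻¹ ∘ α = γ⁻¹` needed along the way
holds because `γ⁻¹ ∘ α` is again a convolution inverse of `γ`.
-/

open LinearMap (BilinForm)
open TensorProduct

namespace LinearMap.BilinForm

variable {R M N M' N' : Type*} [CommSemiring R] [AddCommMonoid M] [Module R M] [AddCommMonoid N]
  [Module R N] [AddCommMonoid M'] [Module R M'] [AddCommMonoid N'] [Module R N']

attribute [local ext] TensorProduct.ext in
lemma tmul_compl₁₂ (A : BilinForm R M) (B : BilinForm R N) (f g : M' →ₗ[R] M)
    (f' g' : N' →ₗ[R] N) :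
    BilinForm.tmul (A.compl₁₂ f g) (B.compl₁₂ f' g')
      = (A.tmul B).compl₁₂ (map f f') (map g g') := by
  ext; simp

attribute [local ext] TensorProduct.ext in
lemma tmul_tmul_compl₁₂_assoc (A B C : BilinForm R M) :
    (A.tmul (B.tmul C)).compl₁₂ (TensorProduct.assoc R M M M).toLinearMap
      (TensorProduct.assoc R M M M).toLinearMap = BilinForm.tmul (A.tmul B) C := by
  ext; simp [mul_assoc]

end LinearMap.BilinForm

namespace HomHopf

variable {k : Type u} {H : Type v} [Field k] [AddCommGroup H] [Module k H] (HH : HomHopf k H)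

lemma comul_comp_α : HH.comul ∘ₗ HH.α = map HH.α HH.α ∘ₗ HH.comul := by
  ext x
  simp [HH.comul_α, HH.repr]

lemma assoc_comp_map_comul_comp_comul :
    (TensorProduct.assoc k H H H).toLinearMap ∘ₗ map HH.comul HH.α ∘ₗ HH.comul
      = map HH.α HH.comul ∘ₗ HH.comul := by
  ext x
  simpa [HH.repr, map_sum] using HH.hom_coassoc x

section Functionals

variable (f g e : H →ₗ[k] k)

lemma conv1_α (x : H) :
    conv1 HH f g (HH.α x) = conv1 HH (f ∘ₗ HH.α) (g ∘ₗ HH.α) x := by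
  have := congr(TensorProduct.lift (BilinForm.linMulLin f g) $(HH.comul_α x))
  simpa [conv1, HH.repr] using this

lemma counit_conv1 (x : H) : conv1 HH HH.counit f x = f (HH.α x) := by
  simpa [conv1] using congr(f $(HH.counit_left x))

lemma conv1_counit (x : H) : conv1 HH f HH.counit x = f (HH.α x) := by
  simpa [conv1, mul_comm] using congr(f $(HH.counit_right x))

lemma conv1_mul (x y : H) :
    conv1 HH f g (HH.mul x y) = ∑ i ∈ HH.T x, ∑ j ∈ HH.T y,
      f (HH.mul (HH.d1 x i) (HH.d1 y j)) * g (HH.mul (HH.d2 x i) (HH.d2 y j)) := by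
  have := congr(TensorProduct.lift (BilinForm.linMulLin f g) $(HH.comul_mul x y))
  simpa [conv1, HH.repr] using this

lemma conv1_assoc (x : H) :
    conv1 HH (conv1 HH f g) (e ∘ₗ HH.α) x
      = conv1 HH (f ∘ₗ HH.α) (conv1 HH g e) x := by
  have := congr((LinearMap.mul' k k ∘ₗ map f (LinearMap.mul' k k ∘ₗ map g e))
    $(HH.hom_coassoc x))
  simp only [HH.repr, sum_tmul, map_sum, assoc_tmul, LinearMap.coe_comp, Function.comp_apply,
    map_tmul, LinearMap.mul'_apply] at this
  simpa [conv1, Finset.sum_mul, Finset.mul_sum, mul_assoc] using this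

lemma apply_α_of_convInv1 (hf : ∀ x, f (HH.α x) = f x) (hinv : ConvInv1 HH f g) (x : H) :
    g (HH.α x) = g x := by
  have hright : ∀ y, conv1 HH f (g ∘ₗ HH.α) y = HH.counit y := fun y => by
    rw [← HH.counit_α, ← hinv.1, conv1_α]
    simp only [conv1, LinearMap.comp_apply, LinearEquiv.coe_coe, hf]
  -- `g ∘ α` is a right inverse of `f` and `g` a left one; Hom-associativity compares them
  have key : ∀ y, g (HH.α (HH.α (HH.α y))) = g (HH.α (HH.α y)) := fun y => by
    have h := conv1_assoc HH g f (g ∘ₗ HH.α) y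
    rwa [funext hinv.2, funext hright, counit_conv1, conv1_counit] at h
  simpa using key (HH.α.symm (HH.α.symm x))

end Functionals

section Forms

noncomputable def convForm (A B : BilinForm k H) : BilinForm k H :=
  (A.tmul B).compl₁₂ HH.comul HH.comul

noncomputable def convFirst (f : H →ₗ[k] k) (B : BilinForm k H) : BilinForm k H :=
  TensorProduct.lift ((LinearMap.lsmul k (H →ₗ[k] k)).compl₁₂ f B) ∘ₗ HH.comul

variable {HH}

lemma convForm_apply (A B : BilinForm k H) (x y : H) :
    HH.convForm A B x y
      = ∑ i ∈ HH.T x, ∑ j ∈ HH.T y, A (HH.d1 x i) (HH.d1 y j) * B (HH.d2 x i) (HH.d2 y j) := by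
  simp only [convForm, LinearMap.compl₁₂_apply, HH.repr, map_sum, LinearMap.sum_apply,
    BilinForm.tensorDistrib_tmul, smul_eq_mul, mul_comm]
  exact Finset.sum_comm

lemma convForm_assoc (A P B : BilinForm k H) :
    HH.convForm (HH.convForm A P) (B.compl₁₂ HH.α HH.α)
      = HH.convForm (A.compl₁₂ HH.α HH.α) (HH.convForm P B) := by
  simp only [convForm, BilinForm.tmul_compl₁₂, ← LinearMap.compl₁₂_comp_comp,
    ← BilinForm.tmul_tmul_compl₁₂_assoc, LinearMap.comp_assoc, assoc_comp_map_comul_comp_comul]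

lemma convForm_compl₁₂_α (A B : BilinForm k H) :
    (HH.convForm A B).compl₁₂ HH.α HH.α
      = HH.convForm (A.compl₁₂ HH.α HH.α) (B.compl₁₂ HH.α HH.α) := by
  simp only [convForm, BilinForm.tmul_compl₁₂, ← LinearMap.compl₁₂_comp_comp, comul_comp_α]

lemma linMulLin_counit_convForm (B : BilinForm k H) :
    HH.convForm (BilinForm.linMulLin HH.counit HH.counit) B = B.compl₁₂ HH.α HH.α := by
  ext x y
  simp only [convForm_apply, BilinForm.linMulLin_apply, LinearMap.compl₁₂_apply,
    LinearEquiv.coe_coe, ← HH.counit_left, map_sum, map_smul, LinearMap.sum_apply,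
    LinearMap.smul_apply, smul_eq_mul, Finset.mul_sum]
  rw [Finset.sum_comm]
  exact Finset.sum_congr rfl fun _ _ => Finset.sum_congr rfl fun _ _ => by ring

lemma convForm_convForm_of_convForm_eq_counit (A P Q D : BilinForm k H)
    (hP : P.compl₁₂ HH.α HH.α = P) (hQ : Q.compl₁₂ HH.α HH.α = Q)
    (hPQ : HH.convForm P Q = BilinForm.linMulLin HH.counit HH.counit) :
    HH.convForm (HH.convForm A P) (HH.convForm Q D)
      = HH.convForm (A.compl₁₂ HH.α HH.α) (D.compl₁₂ HH.α HH.α) := by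
  set D' := D.compl₁₂ HH.α.symm.toLinearMap HH.α.symm.toLinearMap
  have hD' : D'.compl₁₂ HH.α HH.α = D := by ext; simp [D']
  have hQD : HH.convForm Q D = (HH.convForm Q D').compl₁₂ HH.α HH.α := by
    rw [convForm_compl₁₂_α, hQ, hD']
  rw [hQD, convForm_assoc]
  congr 1
  calc HH.convForm P (HH.convForm Q D')
      = HH.convForm (P.compl₁₂ HH.α HH.α) (HH.convForm Q D') := by rw [hP]
    _ = HH.convForm (HH.convForm P Q) (D'.compl₁₂ HH.α HH.α) := (convForm_assoc _ _ _).symm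
    _ = D.compl₁₂ HH.α HH.α := by rw [hPQ, hD', linMulLin_counit_convForm]

lemma convForm_linMulLin (f g f' g' : H →ₗ[k] k) (x y : H) :
    HH.convForm (BilinForm.linMulLin f g) (BilinForm.linMulLin f' g') x y
      = conv1 HH f f' x * conv1 HH g g' y := by
  simp only [convForm_apply, BilinForm.linMulLin_apply, conv1, Finset.sum_mul_sum]
  exact Finset.sum_congr rfl fun _ _ => Finset.sum_congr rfl fun _ _ => by ring

lemma convForm_mul_compr₂ (f g : H →ₗ[k] k) (x y : H) :
    HH.convForm (HH.mul.compr₂ f) (HH.mul.compr₂ g) x y = conv1 HH f g (HH.mul x y) := by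
  simp [convForm_apply, conv1_mul]

lemma convFirst_apply (f : H →ₗ[k] k) (B : BilinForm k H) (c w : H) :
    HH.convFirst f B c w = ∑ a ∈ HH.T c, f (HH.d1 c a) * B (HH.d2 c a) w := by
  simp [convFirst, HH.repr]

lemma convFirst_one (f : H →ₗ[k] k) (B : BilinForm k H) :
    HH.convFirst f B HH.one = f HH.one • B HH.one := by
  simp [convFirst, HH.comul_one]

lemma convFirst_α (f : H →ₗ[k] k) (B : BilinForm k H) (c : H) :
    HH.convFirst f B (HH.α c) = HH.convFirst (f ∘ₗ HH.α) (B ∘ₗ HH.α) c := by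
  simp [convFirst, HH.comul_α, HH.repr]

lemma convForm_linMulLin_apply_left (f g : H →ₗ[k] k) (B : BilinForm k H) (c w : H) :
    HH.convForm (BilinForm.linMulLin f g) B c w = conv1 HH g (HH.convFirst f B c) w := by
  simp only [convForm_apply, conv1, convFirst_apply, BilinForm.linMulLin_apply, Finset.mul_sum]
  rw [Finset.sum_comm]
  exact Finset.sum_congr rfl fun _ _ => Finset.sum_congr rfl fun _ _ => by ring

lemma convForm_linMulLin_apply_right (f g : H →ₗ[k] k) (B : BilinForm k H) (w c : H) :
    HH.convForm (BilinForm.linMulLin f g) B w c = conv1 HH f (HH.convFirst g B.flip c) w := by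
  simp only [convForm_apply, conv1, convFirst_apply, BilinForm.linMulLin_apply, Finset.mul_sum,
    BilinForm.flip_apply]
  exact Finset.sum_congr rfl fun _ _ => Finset.sum_congr rfl fun _ _ => by ring

lemma linMulLin_compl₁₂_α {f g : H →ₗ[k] k} (hf : ∀ x, f (HH.α x) = f x)
    (hg : ∀ x, g (HH.α x) = g x) :
    (BilinForm.linMulLin f g).compl₁₂ HH.α HH.α = BilinForm.linMulLin f g := by
  ext; simp [hf, hg]

lemma mul_compr₂_compl₁₂_α {f : H →ₗ[k] k} (hf : ∀ x, f (HH.α x) = f x) :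
    (HH.mul.compr₂ f).compl₁₂ HH.α HH.α = HH.mul.compr₂ f := by
  ext; simp [← HH.α_mul, hf]

lemma mul_compr₂_convForm_mul_compr₂ {f g : H →ₗ[k] k}
    (hfg : ∀ x, conv1 HH f g x = HH.counit x) :
    HH.convForm (HH.mul.compr₂ f) (HH.mul.compr₂ g) = BilinForm.linMulLin HH.counit HH.counit := by
  ext; simp [convForm_mul_compr₂, hfg, HH.counit_mul]

lemma linMulLin_convForm_linMulLin {f g : H →ₗ[k] k}
    (hfg : ∀ x, conv1 HH f g x = HH.counit x) :
    HH.convForm (BilinForm.linMulLin f f) (BilinForm.linMulLin g g)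
      = BilinForm.linMulLin HH.counit HH.counit := by
  ext; simp [convForm_linMulLin, hfg]

lemma alphaInvariant2_of_compl₁₂_α {B : BilinForm k H} (hB : B.compl₁₂ HH.α HH.α = B) :
    AlphaInvariant2 HH (fun h g => B h g) :=
  fun h g => LinearMap.congr_fun₂ hB h g

lemma convInv2_of_convForm_eq_counit {A B : BilinForm k H}
    (hAB : HH.convForm A B = BilinForm.linMulLin HH.counit HH.counit)
    (hBA : HH.convForm B A = BilinForm.linMulLin HH.counit HH.counit) :
    ConvInv2 HH (fun h g => A h g) (fun h g => B h g) :=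
  ⟨fun h g => by simpa [convForm_apply] using LinearMap.congr_fun₂ hAB h g,
    fun h g => by simpa [convForm_apply] using LinearMap.congr_fun₂ hBA h g⟩

end Forms

section D1

variable (γ δ : H →ₗ[k] k)

noncomputable def D1Form : BilinForm k H :=
  HH.convForm (BilinForm.linMulLin γ γ) (HH.mul.compr₂ δ)

noncomputable def D1InvForm : BilinForm k H :=
  HH.convForm (HH.mul.compr₂ γ) (BilinForm.linMulLin δ δ)

lemma D1_eq_D1Form : D1 HH γ δ = fun h g => HH.D1Form γ δ h g := by
  ext; simp [D1, D1Form, convForm_apply]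

variable {HH γ δ}

lemma D1Form_one_left (hone : γ HH.one = 1) (hδα : ∀ x, δ (HH.α x) = δ x)
    (hinv : ConvInv1 HH γ δ) (h : H) : HH.D1Form γ δ HH.one h = HH.counit h := by
  have hslice : HH.convFirst γ (HH.mul.compr₂ δ) HH.one = δ := by
    ext; simp [convFirst_one, hone, HH.one_mul, hδα]
  rw [D1Form, convForm_linMulLin_apply_left, hslice, hinv.1]

lemma D1Form_one_right (hone : γ HH.one = 1) (hδα : ∀ x, δ (HH.α x) = δ x)
    (hinv : ConvInv1 HH γ δ) (h : H) : HH.D1Form γ δ h HH.one = HH.counit h := by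
  have hslice : HH.convFirst γ (BilinForm.flip (HH.mul.compr₂ δ)) HH.one = δ := by
    ext; simp [convFirst_one, hone, HH.mul_one, hδα]
  rw [D1Form, convForm_linMulLin_apply_right, hslice, hinv.1]

lemma D1Form_compl₁₂_α (hα : ∀ x, γ (HH.α x) = γ x) (hδα : ∀ x, δ (HH.α x) = δ x) :
    (HH.D1Form γ δ).compl₁₂ HH.α HH.α = HH.D1Form γ δ := by
  rw [D1Form, convForm_compl₁₂_α, linMulLin_compl₁₂_α hα hα, mul_compr₂_compl₁₂_α hδα]

lemma D1Form_convForm_D1InvForm (hα : ∀ x, γ (HH.α x) = γ x) (hδα : ∀ x, δ (HH.α x) = δ x)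
    (hinv : ConvInv1 HH γ δ) :
    HH.convForm (HH.D1Form γ δ) (HH.D1InvForm γ δ) = BilinForm.linMulLin HH.counit HH.counit := by
  rw [D1Form, D1InvForm, convForm_convForm_of_convForm_eq_counit _ _ _ _
      (mul_compr₂_compl₁₂_α hδα) (mul_compr₂_compl₁₂_α hα)
      (mul_compr₂_convForm_mul_compr₂ hinv.2),
    linMulLin_compl₁₂_α hα hα, linMulLin_compl₁₂_α hδα hδα, linMulLin_convForm_linMulLin hinv.1]

lemma D1InvForm_convForm_D1Form (hα : ∀ x, γ (HH.α x) = γ x) (hδα : ∀ x, δ (HH.α x) = δ x)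
    (hinv : ConvInv1 HH γ δ) :
    HH.convForm (HH.D1InvForm γ δ) (HH.D1Form γ δ) = BilinForm.linMulLin HH.counit HH.counit := by
  rw [D1Form, D1InvForm, convForm_convForm_of_convForm_eq_counit _ _ _ _
      (linMulLin_compl₁₂_α hδα hδα) (linMulLin_compl₁₂_α hα hα)
      (linMulLin_convForm_linMulLin hinv.2),
    mul_compr₂_compl₁₂_α hα, mul_compr₂_compl₁₂_α hδα, mul_compr₂_convForm_mul_compr₂ hinv.1]

lemma D1Form_convForm_mul_compr₂ (hα : ∀ x, γ (HH.α x) = γ x) (hδα : ∀ x, δ (HH.α x) = δ x)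
    (hinv : ConvInv1 HH γ δ) {ψ Φ : H →ₗ[k] k} (hψ : ∀ w, ψ w = conv1 HH γ Φ w) :
    HH.convForm (HH.D1Form γ δ) (HH.mul.compr₂ ψ)
      = HH.convForm (BilinForm.linMulLin γ γ) ((HH.mul.compr₂ Φ).compl₁₂ HH.α HH.α) := by
  have hψ' : HH.mul.compr₂ ψ = HH.convForm (HH.mul.compr₂ γ) (HH.mul.compr₂ Φ) := by
    ext; simp [convForm_mul_compr₂, hψ]
  rw [hψ', D1Form, convForm_convForm_of_convForm_eq_counit _ _ _ _
      (mul_compr₂_compl₁₂_α hδα) (mul_compr₂_compl₁₂_α hα) (mul_compr₂_convForm_mul_compr₂ hinv.2),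
    linMulLin_compl₁₂_α hα hα]

lemma D1Form_leftCocycleEq (hα : ∀ x, γ (HH.α x) = γ x) (hδα : ∀ x, δ (HH.α x) = δ x)
    (hinv : ConvInv1 HH γ δ) : LeftCocycleEq HH (fun h g => HH.D1Form γ δ h g) := by
  intro h l m
  have hγ : γ ∘ₗ HH.α = γ := LinearMap.ext hα
  have hL := D1Form_convForm_mul_compr₂ hα hδα hinv (ψ := HH.D1Form γ δ (HH.α (HH.α h)))
    (convForm_linMulLin_apply_left γ γ (HH.mul.compr₂ δ) (HH.α (HH.α h)))
  have hR := D1Form_convForm_mul_compr₂ hα hδα hinv (ψ := (HH.D1Form γ δ).flip (HH.α (HH.α m)))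
    fun w => by
      rw [BilinForm.flip_apply]
      exact convForm_linMulLin_apply_right γ γ (HH.mul.compr₂ δ) w (HH.α (HH.α m))
  calc _ = HH.convForm (HH.D1Form γ δ) (HH.mul.compr₂ (HH.D1Form γ δ (HH.α (HH.α h)))) l m := by
        simp only [convForm_apply, LinearMap.compr₂_apply]
    _ = ∑ a ∈ HH.T h, ∑ j ∈ HH.T l, ∑ n ∈ HH.T m, γ (HH.d1 h a) * γ (HH.d1 l j) * γ (HH.d1 m n) *
          δ (HH.mul (HH.α (HH.α (HH.d2 h a))) (HH.mul (HH.α (HH.d2 l j)) (HH.α (HH.d2 m n)))) := by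
        rw [hL]
        simp only [convForm_apply, convFirst_apply, convFirst_α, hγ, BilinForm.linMulLin_apply,
          LinearMap.compl₁₂_apply, LinearMap.compr₂_apply, LinearMap.comp_apply,
          LinearEquiv.coe_coe, Finset.mul_sum]
        rw [Finset.sum_comm_cycle]
        exact Finset.sum_congr rfl fun _ _ => Finset.sum_congr rfl fun _ _ =>
          Finset.sum_congr rfl fun _ _ => by ring
    _ = ∑ a ∈ HH.T h, ∑ j ∈ HH.T l, ∑ n ∈ HH.T m, γ (HH.d1 h a) * γ (HH.d1 l j) * γ (HH.d1 m n) *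
          δ (HH.mul (HH.mul (HH.α (HH.d2 h a)) (HH.α (HH.d2 l j))) (HH.α (HH.α (HH.d2 m n)))) := by
        simp only [HH.hom_assoc]
    _ = HH.convForm (HH.D1Form γ δ) (HH.mul.compr₂ ((HH.D1Form γ δ).flip (HH.α (HH.α m)))) h l := by
        rw [hR]
        simp only [convForm_apply, convFirst_apply, convFirst_α, hγ, BilinForm.linMulLin_apply,
          LinearMap.compl₁₂_apply, LinearMap.compr₂_apply, LinearMap.comp_apply,
          LinearEquiv.coe_coe, BilinForm.flip_apply, Finset.mul_sum]
        exact Finset.sum_congr rfl fun _ _ => Finset.sum_congr rfl fun _ _ =>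
          Finset.sum_congr rfl fun _ _ => by ring
    _ = _ := by simp only [convForm_apply, LinearMap.compr₂_apply, BilinForm.flip_apply]

end D1

end HomHopf

open HomHopf in
/-- If `γ : H → k` is normalized (`γ(1) = 1`), convolution invertible
(with inverse `δ`) and satisfies `γ∘α = γ`, then
`D¹(γ)(h,g) = γ(h₁)γ(g₁)γ⁻¹(h₂g₂)` is a normalized, convolution invertible left
Hom-2-cocycle. -/
theorem D1_is_leftCocycle
    {k : Type u} {H : Type v} [Field k] [AddCommGroup H] [Module k H]
    (HH : HomHopf k H) (γ δ : H →ₗ[k] k)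
    (hone : γ HH.one = 1)
    (hα : ∀ h, γ (HH.α h) = γ h)
    (hinv : ConvInv1 HH (fun h => γ h) (fun h => δ h)) :
    Normalized2 HH (D1 HH (fun h => γ h) (fun h => δ h)) ∧
    IsLeftCocycle HH (D1 HH (fun h => γ h) (fun h => δ h)) ∧
    (∃ τ, ConvInv2 HH (D1 HH (fun h => γ h) (fun h => δ h)) τ) := by
  have hδα : ∀ x, δ (HH.α x) = δ x := HH.apply_α_of_convInv1 γ δ hα hinv
  rw [HH.D1_eq_D1Form γ δ]
  exact ⟨⟨D1Form_one_left hone hδα hinv, D1Form_one_right hone hδα hinv⟩,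
    ⟨alphaInvariant2_of_compl₁₂_α (D1Form_compl₁₂_α hα hδα), D1Form_leftCocycleEq hα hδα hinv⟩,
    ⟨_, convInv2_of_convForm_eq_counit (D1Form_convForm_D1InvForm hα hδα hinv)
      (D1InvForm_convForm_D1Form hα hδα hinv)⟩⟩
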